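/- arXiv:2103.04546 — 2 statements merged into one kernel-verified Lean document; each statement's English description precedes it below -/
import Mathlib

section
/- Let x ∈ R^Σ be a strictly positive sequence-form strategy. Then the inverse of the Hessian of the dilated entropy DGF at x is given by (∇²ψ)(x)⁻¹ = Σ_{j∈J} Σ_{a∈A_j} (x ∘ u_{ja})(x ∘ u_{ja})ᵀ / (w_j x_{ja}), where u_{ja} ∈ {0,1}^Σ is the indicator of all sequences weakly below ja, and ∘ is the componentwise product. -/
inductive TFT : Type where
  | term : TFT
  | dec : (n : ℕ) → (Fin n → TFT) → TFT
  | obs : (n : ℕ) → (Fin n → TFT) → TFT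

namespace TFT

noncomputable def wt : TFT → ℝ
  | term => 0
  | dec _ c => 2 + 2 * (List.ofFn fun i => wt (c i)).foldr max 0
  | obs _ c => ∑ i, wt (c i)

def Seq : TFT → Type
  | term => Empty
  | dec n c => Σ i : Fin n, Option (Seq (c i))
  | obs n c => Σ i : Fin n, Seq (c i)

instance seqFintype : (t : TFT) → Fintype (Seq t)
  | term => inferInstanceAs (Fintype Empty)
  | dec n c => by
      letI := fun i => seqFintype (c i)
      exact inferInstanceAs (Fintype (Σ i : Fin n, Option (Seq (c i))))
  | obs n c => by
      letI := fun i => seqFintype (c i)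
      exact inferInstanceAs (Fintype (Σ i : Fin n, Seq (c i)))

instance seqDecEq : (t : TFT) → DecidableEq (Seq t)
  | term => inferInstanceAs (DecidableEq Empty)
  | dec n c => by
      letI := fun i => seqDecEq (c i)
      exact inferInstanceAs (DecidableEq (Σ i : Fin n, Option (Seq (c i))))
  | obs n c => by
      letI := fun i => seqDecEq (c i)
      exact inferInstanceAs (DecidableEq (Σ i : Fin n, Seq (c i)))

def IsSF : (t : TFT) → (Seq t → ℝ) → ℝ → Prop
  | term, _, _ => True
  | dec _ c, x, par =>
      (∑ i, x ⟨i, none⟩) = par ∧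
      ∀ i, IsSF (c i) (fun s => x ⟨i, some s⟩) (x ⟨i, none⟩)
  | obs _ c, x, par => ∀ i, IsSF (c i) (fun s => x ⟨i, s⟩) par

noncomputable def decW : (t : TFT) → Seq t → ℝ
  | term => fun s => Empty.elim s
  | dec n c => fun σ => match σ with
      | ⟨_, none⟩ => wt (dec n c)
      | ⟨i, some s⟩ => decW (c i) s
  | obs _ c => fun σ => decW (c σ.1) σ.2

noncomputable def succW : (t : TFT) → Seq t → ℝ
  | term => fun s => Empty.elim s
  | dec _ c => fun σ => match σ with
      | ⟨i, none⟩ => wt (c i)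
      | ⟨i, some s⟩ => succW (c i) s
  | obs _ c => fun σ => succW (c σ.1) σ.2

def parent : (t : TFT) → Seq t → Option (Seq t)
  | term => fun s => Empty.elim s
  | dec _ c => fun σ => match σ with
      | ⟨_, none⟩ => none
      | ⟨i, some s⟩ =>
          some (match parent (c i) s with
            | none => ⟨i, none⟩
            | some q => ⟨i, some q⟩)
  | obs _ c => fun σ => (parent (c σ.1) σ.2).map fun q => ⟨σ.1, q⟩

noncomputable def u : (t : TFT) → Seq t → Seq t → ℝ
  | term => fun s => Empty.elim s
  | dec _ c => fun σ σ' => match σ, σ' with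
      | ⟨i, none⟩, ⟨i', _⟩ => if i' = i then 1 else 0
      | ⟨_, some _⟩, ⟨_, none⟩ => 0
      | ⟨i, some s⟩, ⟨i', some s'⟩ => if h : i' = i then u (c i) s (h ▸ s') else 0
  | obs _ c => fun σ σ' =>
      if h : σ'.1 = σ.1 then u (c σ.1) σ.2 (h ▸ σ'.2) else 0

/-- The Hessian of the dilated entropy DGF at a strictly positive sequence-form
strategy `x`, given entrywise. -/
noncomputable def hess (t : TFT) (x : Seq t → ℝ) : Matrix (Seq t) (Seq t) ℝ :=
  fun σ σ' =>
    if σ' = σ then (decW t σ + succW t σ) / x σ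
    else if parent t σ' = some σ then -(decW t σ') / x σ
    else if parent t σ = some σ' then -(decW t σ) / x σ'
    else 0

/-- The dilated entropy distance-generating function. -/
noncomputable def psi : (t : TFT) → (Seq t → ℝ) → ℝ → ℝ
  | term, _, _ => 0
  | dec n c, x, par =>
      wt (dec n c) *
          (par * Real.log n + ∑ i, x ⟨i, none⟩ * Real.log (x ⟨i, none⟩ / par)) +
        ∑ i, psi (c i) (fun s => x ⟨i, some s⟩) (x ⟨i, none⟩)
  | obs _ c, x, par => ∑ i, psi (c i) (fun s => x ⟨i, s⟩) par

/-- The strategy that randomizes uniformly at every decision point. -/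
def IsUniform : (t : TFT) → (Seq t → ℝ) → ℝ → Prop
  | term, _, _ => True
  | dec n c, x, par =>
      (∀ i : Fin n, x ⟨i, none⟩ = par / n) ∧
      ∀ i, IsUniform (c i) (fun s => x ⟨i, some s⟩) (x ⟨i, none⟩)
  | obs _ c, x, par => ∀ i, IsUniform (c i) (fun s => x ⟨i, s⟩) par

end TFT

/-!
Let `P` be the parent matrix (`P p σ = 1` iff `p` is the parent of `σ`) and `U = (u τ σ)`. The
recursion `u τ σ = [τ = σ] + u τ (parent σ)` says `U (1 - P) = 1`, and the dyadic sum is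
`Dₓ Uᵀ diag (w x)⁻¹ U Dₓ`. The sequence-form constraints give
`∑_{parent τ = σ} w τ x τ = succW σ x σ`, which turns the Hessian into
`Dₓ⁻¹ (1 - P) diag (w x) (1 - P)ᵀ Dₓ⁻¹`, and the product of the two telescopes to `1`. Along a
parent edge the number of ancestors `∑ τ, u τ σ` grows by one, so `parent` has no cycles of
length one or two, which keeps the cases of `hess` apart.
-/

section DescendantIndicator

open Matrix

variable {ι : Type*} [Fintype ι] [DecidableEq ι]

def parentMatrix (R : Type*) [Zero R] [One R] (parent : ι → Option ι) : Matrix ι ι R :=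
  of fun p σ => if parent σ = some p then 1 else 0

variable {R : Type*} [CommRing R]

def IsDescendantIndicator (parent : ι → Option ι) (u : ι → ι → R) : Prop :=
  ∀ τ σ, u τ σ = (if τ = σ then 1 else 0) + (parent σ).elim 0 (u τ)

variable {parent : ι → Option ι} {u : ι → ι → R}

lemma sum_mul_parentMatrix_apply (f : ι → R) (σ : ι) :
    ∑ p, f p * parentMatrix R parent p σ = (parent σ).elim 0 f := by
  cases h : parent σ <;> simp [parentMatrix, h]

namespace IsDescendantIndicator

lemma sum_eq_sum_add_one_of_parent_eq (hu : IsDescendantIndicator parent u) {σ p : ι}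
    (h : parent σ = some p) : ∑ τ, u τ σ = ∑ τ, u τ p + 1 := by
  simp [hu _ σ, h, Finset.sum_add_distrib, add_comm]

lemma mul_one_sub_parentMatrix (hu : IsDescendantIndicator parent u) :
    of u * (1 - parentMatrix R parent) = 1 := by
  ext τ σ
  rw [mul_sub, mul_one, Matrix.sub_apply, mul_apply]
  simp only [of_apply, sum_mul_parentMatrix_apply, hu τ σ, one_apply]
  ring

variable [LinearOrder R] [IsStrictOrderedRing R]

lemma parent_ne_self (hu : IsDescendantIndicator parent u) (σ : ι) : parent σ ≠ some σ :=
  fun h => by linarith [hu.sum_eq_sum_add_one_of_parent_eq h]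

lemma parent_parent_ne (hu : IsDescendantIndicator parent u) {σ p : ι}
    (h : parent σ = some p) : parent p ≠ some σ :=
  fun h' => by
    linarith [hu.sum_eq_sum_add_one_of_parent_eq h, hu.sum_eq_sum_add_one_of_parent_eq h']

end IsDescendantIndicator

lemma one_sub_parentMatrix_mul_diagonal_mul_transpose_apply (f : ι → R) (σ σ' : ι) :
    ((1 - parentMatrix R parent) * diagonal f * (1 - parentMatrix R parent)ᵀ :
        Matrix ι ι R) σ σ' =
      (if σ = σ' then f σ + ∑ τ, (if parent τ = some σ then f τ else 0) else 0) -
        (if parent σ' = some σ then f σ' else 0) -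
        (if parent σ = some σ' then f σ else 0) := by
  simp only [sub_mul, mul_sub, transpose_sub, transpose_one, one_mul, mul_one, Matrix.sub_apply,
    mul_diagonal, diagonal_mul, transpose_apply]
  rw [mul_apply]
  simp only [mul_diagonal, parentMatrix, transpose_apply, of_apply, diagonal_apply]
  have hsum : ∑ τ, (if parent τ = some σ then 1 else 0) * f τ *
      (if parent τ = some σ' then 1 else 0) =
        if σ = σ' then ∑ τ, (if parent τ = some σ then f τ else 0) else 0 := by
    split_ifs with h
    · subst h
      exact Finset.sum_congr rfl fun τ _ => by split_ifs <;> ring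
    · exact Finset.sum_eq_zero fun τ _ => by split_ifs <;> simp_all
  rw [hsum]
  split_ifs <;> ring

lemma sum_smul_vecMulVec_eq_diagonal_mul (c x : ι → R) (u : ι → ι → R) :
    ∑ τ, c τ • vecMulVec (fun σ => x σ * u τ σ) (fun σ => x σ * u τ σ) =
      diagonal x * (of u)ᵀ * diagonal c * of u * diagonal x := by
  ext σ σ'
  rw [mul_diagonal, mul_apply]
  simp only [Matrix.sum_apply, Matrix.smul_apply, vecMulVec_apply, mul_diagonal,
    diagonal_mul, transpose_apply, of_apply, smul_eq_mul, Finset.sum_mul]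
  exact Finset.sum_congr rfl fun τ _ => by ring

lemma mul_eq_one_of_factors {D D' L U F E : Matrix ι ι R}
    (hD : D' * D = 1) (hF : F * E = 1) (hU : U * L = 1) :
    (D' * L * F * Lᵀ * D') * (D * Uᵀ * E * U * D) = 1 := by
  have hU' : Lᵀ * Uᵀ = 1 := by rw [← transpose_mul, hU, transpose_one]
  have hL : L * U = 1 := mul_eq_one_comm.mp hU
  simp only [Matrix.mul_assoc]
  rw [← Matrix.mul_assoc D' D, hD, Matrix.one_mul, ← Matrix.mul_assoc Lᵀ, hU', Matrix.one_mul,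
    ← Matrix.mul_assoc F, hF, Matrix.one_mul, ← Matrix.mul_assoc L, hL, Matrix.one_mul, hD]

end DescendantIndicator

namespace TFT

variable {n : ℕ} {c : Fin n → TFT}

lemma sum_seq_dec (f : Seq (dec n c) → ℝ) :
    ∑ σ, f σ = ∑ i, (f ⟨i, none⟩ + ∑ s, f ⟨i, some s⟩) :=
  (Fintype.sum_sigma f).trans (Finset.sum_congr rfl fun _ _ => Fintype.sum_option _)

lemma sum_seq_obs (f : Seq (obs n c) → ℝ) : ∑ σ, f σ = ∑ i, ∑ s, f ⟨i, s⟩ :=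
  Fintype.sum_sigma f

-- Lets `simp` accept `⟨i, o⟩ : Seq (dec n c)` as well typed. It comes after the two sum lemmas
-- so that their `Fintype` instance is still `seqFintype`.
attribute [reducible] Seq

@[simp] lemma parent_dec_none (i : Fin n) :
    parent (dec n c) ⟨i, none⟩ = none := by simp [parent]

@[simp] lemma parent_dec_some (i : Fin n) (s : Seq (c i)) :
    parent (dec n c) ⟨i, some s⟩ = some ⟨i, parent (c i) s⟩ := by
  cases h : parent (c i) s <;> simp [parent, h]

@[simp] lemma parent_obs (i : Fin n) (s : Seq (c i)) :
    parent (obs n c) ⟨i, s⟩ = (parent (c i) s).map (Sigma.mk i) := by simp [parent]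

@[simp] lemma decW_dec_none (i : Fin n) :
    decW (dec n c) ⟨i, none⟩ = wt (dec n c) := by simp [decW]

@[simp] lemma decW_dec_some (i : Fin n) (s : Seq (c i)) :
    decW (dec n c) ⟨i, some s⟩ = decW (c i) s := by simp [decW]

@[simp] lemma decW_obs (i : Fin n) (s : Seq (c i)) :
    decW (obs n c) ⟨i, s⟩ = decW (c i) s := by simp [decW]

@[simp] lemma succW_dec_none (i : Fin n) :
    succW (dec n c) ⟨i, none⟩ = wt (c i) := by simp [succW]

@[simp] lemma succW_dec_some (i : Fin n) (s : Seq (c i)) :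
    succW (dec n c) ⟨i, some s⟩ = succW (c i) s := by simp [succW]

@[simp] lemma succW_obs (i : Fin n) (s : Seq (c i)) :
    succW (obs n c) ⟨i, s⟩ = succW (c i) s := by simp [succW]

@[simp] lemma u_dec_none (i i' : Fin n) (o : Option (Seq (c i'))) :
    u (dec n c) ⟨i, none⟩ ⟨i', o⟩ = if i' = i then 1 else 0 := by simp [u]

@[simp] lemma u_dec_some_none (i i' : Fin n) (s : Seq (c i)) :
    u (dec n c) ⟨i, some s⟩ ⟨i', none⟩ = 0 := by simp [u]

@[simp] lemma u_dec_some_some (i : Fin n) (s s' : Seq (c i)) :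
    u (dec n c) ⟨i, some s⟩ ⟨i, some s'⟩ = u (c i) s s' := by simp [u]

lemma u_dec_some_of_ne {i i' : Fin n} (h : i' ≠ i) (s : Seq (c i)) (o : Option (Seq (c i'))) :
    u (dec n c) ⟨i, some s⟩ ⟨i', o⟩ = 0 := by cases o <;> simp [u, h]

@[simp] lemma u_obs_same (i : Fin n) (s s' : Seq (c i)) :
    u (obs n c) ⟨i, s⟩ ⟨i, s'⟩ = u (c i) s s' := by simp [u]

lemma u_obs_of_ne {i i' : Fin n} (h : i' ≠ i) (s : Seq (c i)) (s' : Seq (c i')) :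
    u (obs n c) ⟨i, s⟩ ⟨i', s'⟩ = 0 := by simp [u, h]

lemma wt_dec_pos : 0 < wt (dec n c) := by
  have : ∀ l : List ℝ, 0 ≤ l.foldr max 0 := fun l => by
    induction l with
    | nil => exact le_rfl
    | cons a l ih => exact le_max_of_le_right ih
  have := this (List.ofFn fun i => wt (c i))
  rw [wt]; linarith

theorem decW_pos (t : TFT) : ∀ σ, 0 < decW t σ := by
  induction t with
  | term => exact fun σ => σ.elim
  | dec n c ih => rintro ⟨i, _ | s⟩ <;> simp [wt_dec_pos, ih]
  | obs n c ih => rintro ⟨i, s⟩; simp [ih]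

theorem isDescendantIndicator_u (t : TFT) : IsDescendantIndicator (parent t) (u t) := by
  induction t with
  | term => exact fun τ => τ.elim
  | dec n c ih =>
      rintro ⟨i, _ | s⟩ ⟨i', _ | s'⟩ <;> rcases eq_or_ne i' i with rfl | h
      · simp
      · simp [h, h.symm]
      · simp
      · simp [h, h.symm]
      · simp
      · simp [h.symm]
      · cases hp : parent (c i') s' <;> simp [ih i' s s', hp]
      · simp [u_dec_some_of_ne h, h.symm]
  | obs n c ih =>
      rintro ⟨i, s⟩ ⟨i', s'⟩
      rcases eq_or_ne i' i with rfl | h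
      · cases hp : parent (c i') s' <;> simp [ih i' s s', hp]
      · cases hp : parent (c i') s' <;> simp [u_obs_of_ne h, h.symm, hp]

theorem sum_ite_parent_eq_decW_mul (t : TFT) :
    ∀ (x : Seq t → ℝ) (par : ℝ), IsSF t x par → ∀ o : Option (Seq t),
      ∑ σ, (if parent t σ = o then decW t σ * x σ else 0) =
        o.elim (wt t * par) fun σ => succW t σ * x σ := by
  induction t with
  | term => rintro x par - (_ | ⟨⟨⟩⟩); simp [wt]
  | dec n c ih =>
      rintro x par ⟨hsum, hch⟩ (_ | ⟨i, o⟩)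
      · rw [sum_seq_dec]
        simp [← Finset.mul_sum, hsum]
      · rw [sum_seq_dec, Finset.sum_eq_single i (fun j _ hj => by simp [hj])
          (fun h => absurd (Finset.mem_univ i) h)]
        have := ih i _ _ (hch i) o
        cases o <;> simp_all
  | obs n c ih =>
      rintro x par hsf (_ | ⟨i, o⟩)
      · rw [sum_seq_obs]
        simpa [wt, Finset.sum_mul] using Finset.sum_congr rfl fun i _ => ih i _ _ (hsf i) none
      · rw [sum_seq_obs, Finset.sum_eq_single i (fun j _ hj => by simp [hj])
          (fun h => absurd (Finset.mem_univ i) h)]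
        simpa using ih i _ _ (hsf i) (some o)

open Matrix in
theorem hess_eq_diagonal_mul (t : TFT) (x : Seq t → ℝ) (hx : ∀ σ, x σ ≠ 0) (hsf : IsSF t x 1) :
    hess t x = diagonal x⁻¹ * (1 - parentMatrix ℝ (parent t)) * diagonal (decW t * x) *
      (1 - parentMatrix ℝ (parent t))ᵀ * diagonal x⁻¹ := by
  have hu := isDescendantIndicator_u t
  ext σ σ'
  simp only [Matrix.mul_assoc, diagonal_mul]
  simp only [← Matrix.mul_assoc, mul_diagonal,
    one_sub_parentMatrix_mul_diagonal_mul_transpose_apply]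
  simp only [Pi.mul_apply, Pi.inv_apply, sum_ite_parent_eq_decW_mul t x 1 hsf (some σ),
    Option.elim_some, hess]
  rcases eq_or_ne σ' σ with rfl | hne
  · simp only [if_true, hu.parent_ne_self, if_false]
    field_simp [hx σ']
    ring
  by_cases hσ' : parent t σ' = some σ
  · simp only [hne, hne.symm, hσ', hu.parent_parent_ne hσ', if_true, if_false]
    field_simp [hx σ, hx σ']
    ring
  by_cases hσ : parent t σ = some σ'
  · simp only [hne, hne.symm, hσ, hσ', if_true, if_false]
    field_simp [hx σ, hx σ']
    ring
  · simp [hne, hne.symm, hσ, hσ']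

open Matrix in
/-- The inverse of the Hessian of the dilated entropy DGF at a strictly positive
sequence-form strategy `x` is the dyadic sum
`Σ_{ja} (x ∘ u_{ja})(x ∘ u_{ja})ᵀ / (w_j x_{ja})`. -/
theorem inv_hess_eq_dyadic_sum (t : TFT) (x : Seq t → ℝ)
    (hpos : ∀ σ, 0 < x σ) (hsf : IsSF t x 1) :
    hess t x *
        (∑ σ : Seq t, ((decW t σ * x σ)⁻¹) •
          Matrix.vecMulVec (fun σ' => x σ' * u t σ σ') (fun σ' => x σ' * u t σ σ')) = 1 ∧
      (∑ σ : Seq t, ((decW t σ * x σ)⁻¹) •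
          Matrix.vecMulVec (fun σ' => x σ' * u t σ σ') (fun σ' => x σ' * u t σ σ')) *
        hess t x = 1 := by
  refine (fun h => ⟨h, mul_eq_one_comm.mp h⟩) ?_
  have hx : ∀ σ, x σ ≠ 0 := fun σ => (hpos σ).ne'
  have hdiag : ∀ f g : Seq t → ℝ, (∀ σ, f σ * g σ = 1) → diagonal f * diagonal g = 1 :=
    fun f g h => by rw [diagonal_mul_diagonal, ← diagonal_one]; exact congrArg diagonal (funext h)
  rw [hess_eq_diagonal_mul t x hx hsf, sum_smul_vecMulVec_eq_diagonal_mul]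
  refine mul_eq_one_of_factors (hdiag _ _ fun σ => inv_mul_cancel₀ (hx σ))
    (hdiag _ _ fun σ => mul_inv_cancel₀ ?_) (isDescendantIndicator_u t).mul_one_sub_parentMatrix
  exact mul_ne_zero (decW_pos t σ).ne' (hx σ)

end TFT
end

section
/- Let x be a strictly positive sequence-form strategy and z ∈ R^Σ a vector with nonnegative entries. Then the squared local primal norm satisfies ‖z‖_x² = zᵀ ∇²ψ(x) z ≤ (3/2) Σ_{j∈J} Σ_{a∈A_j} (w_j / x_{ja}) z_{ja}². -/
namespace TFT

lemma foldr_max_nonneg (l : List ℝ) : 0 ≤ l.foldr max 0 := by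
  induction l with
  | nil => simp
  | cons b t ih => exact le_trans ih (le_max_right _ _)

lemma mem_le_foldr_max {l : List ℝ} {a : ℝ} (h : a ∈ l) : a ≤ l.foldr max 0 := by
  induction l with
  | nil => simp at h
  | cons b t ih =>
      rcases List.mem_cons.1 h with h | h
      · subst h; exact le_max_left _ _
      · exact le_trans (ih h) (le_max_right _ _)

lemma wt_nonneg : ∀ t : TFT, 0 ≤ wt t
  | term => le_refl 0
  | dec n c => by
      simp only [wt]
      have := foldr_max_nonneg (List.ofFn fun i => wt (c i))
      linarith
  | obs n c => by
      simp only [wt]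
      exact Finset.sum_nonneg fun i _ => wt_nonneg (c i)

lemma decW_nonneg : ∀ (t : TFT) (σ : Seq t), 0 ≤ decW t σ
  | term => fun s => Empty.elim s
  | dec n c => fun σ => match σ with
      | ⟨_, none⟩ => by simp only [decW]; exact wt_nonneg (dec n c)
      | ⟨i, some s⟩ => by simp only [decW]; exact decW_nonneg (c i) s
  | obs n c => fun σ => by simp only [decW]; exact decW_nonneg (c σ.1) σ.2

lemma two_succW_le_decW : ∀ (t : TFT) (σ : Seq t), 2 * succW t σ ≤ decW t σ
  | term => fun s => Empty.elim s
  | dec n c => fun σ => match σ with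
      | ⟨i, none⟩ => by
          have h : wt (c i) ≤ (List.ofFn fun j => wt (c j)).foldr max 0 :=
            mem_le_foldr_max (by simp [List.mem_ofFn])
          simp only [succW, decW, wt]; linarith
      | ⟨i, some s⟩ => by
          simp only [succW, decW]; exact two_succW_le_decW (c i) s
  | obs n c => fun σ => by
      simp only [succW, decW]; exact two_succW_le_decW (c σ.1) σ.2

open Matrix in
/-- Bound on the squared local primal norm for nonnegative vectors:
`‖z‖ₓ² = zᵀ ∇²ψ(x) z ≤ (3/2) Σ_{ja} (w_j / x_{ja}) z_{ja}²`. -/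
theorem primal_local_norm_sq_le (t : TFT) (x : Seq t → ℝ)
    (hpos : ∀ σ, 0 < x σ) (hsf : IsSF t x 1)
    (z : Seq t → ℝ) (hz : ∀ σ, 0 ≤ z σ) :
    z ⬝ᵥ (hess t x).mulVec z
      ≤ (3 / 2) * ∑ σ : Seq t, (decW t σ / x σ) * z σ ^ 2 := by
  have hrw : z ⬝ᵥ (hess t x).mulVec z
      = ∑ σ : Seq t, ∑ σ' : Seq t, z σ * (hess t x σ σ' * z σ') := by
    simp [dotProduct, Matrix.mulVec, Finset.mul_sum]
  rw [hrw, Finset.mul_sum]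
  apply Finset.sum_le_sum
  intro σ _
  have hmem : σ ∈ (Finset.univ : Finset (Seq t)) := Finset.mem_univ σ
  rw [Finset.sum_eq_add_sum_sdiff_singleton_of_mem hmem (fun σ' => z σ * (hess t x σ σ' * z σ'))]
  have hoff : ∑ σ' ∈ Finset.univ \ {σ}, z σ * (hess t x σ σ' * z σ') ≤ 0 := by
    apply Finset.sum_nonpos
    intro σ' hσ'
    have hne : σ' ≠ σ := by
      intro h; subst h; simp at hσ'
    have hentry : hess t x σ σ' ≤ 0 := by
      unfold hess
      rw [if_neg hne]
      split_ifs with h1 h2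
      · exact div_nonpos_iff.2 (Or.inr ⟨neg_nonpos.2 (decW_nonneg t σ'), (hpos σ).le⟩)
      · exact div_nonpos_iff.2 (Or.inr ⟨neg_nonpos.2 (decW_nonneg t σ), (hpos σ').le⟩)
      · exact le_refl 0
    have hre : z σ * (hess t x σ σ' * z σ') = hess t x σ σ' * (z σ * z σ') := by ring
    rw [hre]
    exact mul_nonpos_iff.2 (Or.inr ⟨hentry, mul_nonneg (hz σ) (hz σ')⟩)
  have hdiag : z σ * (hess t x σ σ * z σ) ≤ 3 / 2 * (decW t σ / x σ * z σ ^ 2) := by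
    unfold hess
    rw [if_pos rfl]
    have hx := hpos σ
    have hsucc := two_succW_le_decW t σ
    have hz2 : 0 ≤ z σ ^ 2 := sq_nonneg _
    have : z σ * ((decW t σ + succW t σ) / x σ * z σ)
        = ((decW t σ + succW t σ) / x σ) * z σ ^ 2 := by ring
    rw [this]
    have h32 : (decW t σ + succW t σ) / x σ ≤ (3 / 2 * decW t σ) / x σ :=
      div_le_div_of_nonneg_right (by linarith) hx.le
    calc (decW t σ + succW t σ) / x σ * z σ ^ 2
        ≤ (3 / 2 * decW t σ) / x σ * z σ ^ 2 := mul_le_mul_of_nonneg_right h32 hz2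
      _ = 3 / 2 * (decW t σ / x σ * z σ ^ 2) := by ring
  linarith

end TFT
end
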